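/- Let k ≥ 1 and let μ be a compactly supported Borel probability measure on ℝ^k. Then the Fisher Information τ ↦ I^{(k)}(μ_τ) = ∫ p_τ(x) ‖∇ log p_τ(x)‖² dx is a nonincreasing function of the noise variance τ on (0, ∞). -/

import Mathlib

/-!
Write `J_τ = ‖∇p_τ‖² / p_τ`, so that `I(μ_τ) = ∫ J_τ`. Since `(v, a) ↦ ‖v‖² / a` is jointly
convex, Jensen's inequality bounds the `J` of a mixture of densities by the average of their `J`s.
The semigroup identities `p_{s+τ} = φ_s * p_τ` and `∇p_{s+τ} = φ_s * ∇p_τ` exhibit `p_{s+τ}` as a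
mixture of translates of `p_τ`, so `J_{s+τ} ≤ φ_s * J_τ` pointwise, and integrating gives
`I(μ_{s+τ}) ≤ I(μ_τ)`. The comparison is made between `ℝ≥0∞`-valued integrals; as `FisherInfo` is a
Bochner integral (junk value `0` when not integrable), it also needs `∫ J_τ < ∞`, which follows
from the same Jensen bound for the mixture `p_τ = ∫ φ_τ(· - y) dμ(y)`:
`J_τ ≤ μ * (‖z‖² φ_τ(z) / τ²)`.
-/

open MeasureTheory

noncomputable section

abbrev Euc (k : ℕ) : Type := EuclideanSpace ℝ (Fin k)

/-- The centered Gaussian density on `ℝ^k` with covariance `τ • I`. -/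
def gaussDensity (k : ℕ) (τ : ℝ) (z : Euc k) : ℝ :=
  (2 * Real.pi * τ) ^ (-(k : ℝ) / 2) * Real.exp (-‖z‖ ^ 2 / (2 * τ))

/-- The heat-smoothed density `p_τ(x) = ∫ φ_τ(x - y) dμ(y)`. -/
def heatDensity {k : ℕ} (μ : Measure (Euc k)) (τ : ℝ) (x : Euc k) : ℝ :=
  ∫ y, gaussDensity k τ (x - y) ∂μ

/-- Partial derivative of `f` in the `i`-th coordinate direction. -/
def pderiv' {k : ℕ} (f : Euc k → ℝ) (i : Fin k) (x : Euc k) : ℝ :=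
  fderiv ℝ f x (EuclideanSpace.single i 1)

/-- Entry `(i, j)` of the Hessian matrix of `f` at `x`. -/
def hessEntry {k : ℕ} (f : Euc k → ℝ) (i j : Fin k) (x : Euc k) : ℝ :=
  pderiv' (pderiv' f j) i x

/-- The Laplacian of `f` at `x`. -/
def laplacian' {k : ℕ} (f : Euc k → ℝ) (x : Euc k) : ℝ :=
  ∑ i, hessEntry f i i x

/-- The squared Frobenius norm of the Hessian of `f` at `x`. -/
def hessFrobSq {k : ℕ} (f : Euc k → ℝ) (x : Euc k) : ℝ :=
  ∑ i, ∑ j, hessEntry f i j x ^ 2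

/-- The log heat-smoothed density. -/
def logHeat {k : ℕ} (μ : Measure (Euc k)) (τ : ℝ) (x : Euc k) : ℝ :=
  Real.log (heatDensity μ τ x)

/-- The Fisher Information `I^{(k)}(μ_τ) = ∫ p_τ ‖∇ log p_τ‖²`. -/
def FisherInfo {k : ℕ} (μ : Measure (Euc k)) (τ : ℝ) : ℝ :=
  ∫ x, heatDensity μ τ x * ‖gradient (logHeat μ τ) x‖ ^ 2

/-- The Fisher Information Rate `R^{(k)}(μ_τ) = ∫ p_τ ‖∇² log p_τ‖_F²`. -/
def FisherInfoRate {k : ℕ} (μ : Measure (Euc k)) (τ : ℝ) : ℝ :=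
  ∫ x, heatDensity μ τ x * hessFrobSq (logHeat μ τ) x

/-- The posterior mean `m_τ(x)` of a clean sample given noisy observation `x`. -/
def postMean {k : ℕ} (μ : Measure (Euc k)) (τ : ℝ) (x : Euc k) : Euc k :=
  (heatDensity μ τ x)⁻¹ • ∫ y, gaussDensity k τ (x - y) • y ∂μ

open Real
open scoped ENNReal

lemma ofReal_integral_le_lintegral_ofReal {α : Type*} [MeasurableSpace α] {ν : Measure α}
    {f : α → ℝ} (hf : Integrable f ν) :
    ENNReal.ofReal (∫ y, f y ∂ν) ≤ ∫⁻ y, ENNReal.ofReal (f y) ∂ν := by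
  rw [integral_eq_lintegral_pos_part_sub_lintegral_neg_part hf]
  exact (ENNReal.ofReal_le_ofReal (sub_le_self _ ENNReal.toReal_nonneg)).trans
    ENNReal.ofReal_toReal_le

section Perspective

variable {E : Type*} [NormedAddCommGroup E] [InnerProductSpace ℝ E]

lemma two_mul_inner_sub_mul_sq_norm_le {a : ℝ} (ha : 0 < a) (u v : E) :
    2 * inner ℝ u v - a * ‖u‖ ^ 2 ≤ ‖v‖ ^ 2 / a := by
  have h := norm_sub_sq_real v (a • u)
  rw [norm_smul, real_inner_smul_right, real_inner_comm, Real.norm_of_nonneg ha.le] at h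
  rw [le_div_iff₀ ha]
  nlinarith [sq_nonneg ‖v - a • u‖]

variable [CompleteSpace E] {α : Type*} [MeasurableSpace α] {ν : Measure α}

/-- Jensen's inequality for the jointly convex function `(v, a) ↦ ‖v‖² / a`, proved with the
supporting hyperplane at the barycentre `(∫ v, ∫ a)`. -/
lemma ofReal_sq_norm_integral_div_integral_le {a : α → ℝ} {v : α → E} (ha : ∀ y, 0 < a y)
    (hai : Integrable a ν) (hvi : Integrable v ν) :
    ENNReal.ofReal (‖∫ y, v y ∂ν‖ ^ 2 / ∫ y, a y ∂ν) ≤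
      ∫⁻ y, ENNReal.ofReal (‖v y‖ ^ 2 / a y) ∂ν := by
  set A := ∫ y, a y ∂ν
  set V := ∫ y, v y ∂ν
  rcases le_or_gt A 0 with hA | hA
  · rw [ENNReal.ofReal_of_nonpos (div_nonpos_of_nonneg_of_nonpos (sq_nonneg _) hA)]
    exact zero_le
  set u := A⁻¹ • V
  have hint : Integrable (fun y => 2 * inner ℝ u (v y) - a y * ‖u‖ ^ 2) ν :=
    ((hvi.const_inner u).const_mul 2).sub (hai.mul_const _)
  have hsupport : ‖V‖ ^ 2 / A = ∫ y, (2 * inner ℝ u (v y) - a y * ‖u‖ ^ 2) ∂ν := by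
    rw [integral_sub ((hvi.const_inner u).const_mul 2) (hai.mul_const _),
      integral_const_mul, integral_inner hvi, integral_mul_const, real_inner_smul_left,
      real_inner_self_eq_norm_sq, norm_smul, Real.norm_of_nonneg (inv_nonneg.2 hA.le)]
    field_simp
    ring
  rw [hsupport]
  exact (ofReal_integral_le_lintegral_ofReal hint).trans
    (lintegral_mono fun y => ENNReal.ofReal_le_ofReal
      (two_mul_inner_sub_mul_sq_norm_le (ha y) u (v y)))

end Perspective

section Translation

variable {E : Type*} [NormedAddCommGroup E] [MeasurableSpace E] [BorelSpace E]
  [SecondCountableTopology E]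

lemma lintegral_lintegral_mul_sub (ρ ν : Measure E) [SFinite ρ] [SFinite ν]
    [ρ.IsAddRightInvariant] {g F : E → ℝ≥0∞} (hg : Measurable g) (hF : Measurable F) :
    ∫⁻ x, ∫⁻ y, g y * F (x - y) ∂ν ∂ρ = (∫⁻ y, g y ∂ν) * ∫⁻ z, F z ∂ρ := by
  rw [lintegral_lintegral_swap ((hg.comp measurable_snd).mul
    (hF.comp (measurable_fst.sub measurable_snd))).aemeasurable, ← lintegral_mul_const _ hg]
  refine lintegral_congr fun y => ?_
  rw [lintegral_const_mul (g y) (f := fun x => F (x - y)) (hF.comp (measurable_sub_const y)),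
    lintegral_sub_right_eq_self F y]

section FiniteMeasure

variable {F : Type*} [NormedAddCommGroup F] {μ : Measure E} [IsFiniteMeasure μ] {f : E → F} {C : ℝ}

lemma integrable_comp_sub (hf : Continuous f) (hC : ∀ z, ‖f z‖ ≤ C) (x : E) :
    Integrable (fun y => f (x - y)) μ :=
  .of_bound (hf.comp (continuous_const.sub continuous_id)).aestronglyMeasurable C
    (.of_forall fun _ => hC _)

lemma continuous_integral_comp_sub [NormedSpace ℝ F] (hf : Continuous f) (hC : ∀ z, ‖f z‖ ≤ C) :
    Continuous fun x => ∫ y, f (x - y) ∂μ :=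
  continuous_of_dominated
    (fun _ => (hf.comp (continuous_const.sub continuous_id)).aestronglyMeasurable)
    (fun _ => .of_forall fun _ => hC _) (integrable_const C)
    (.of_forall fun _ => hf.comp (continuous_id.sub continuous_const))

end FiniteMeasure

variable [InnerProductSpace ℝ E] [CompleteSpace E]

lemma hasGradientAt_integral_mul_sub {ν : Measure E} {g f : E → ℝ} {f' : E → E} {C : ℝ}
    (hf : ∀ z, HasGradientAt f (f' z) z) (hf'_meas : Measurable f') (hf'_le : ∀ z, ‖f' z‖ ≤ C)
    (hg : Integrable g ν) (hgf : ∀ x, Integrable (fun y => g y * f (x - y)) ν) (x : E) :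
    HasGradientAt (fun x => ∫ y, g y * f (x - y) ∂ν) (∫ y, g y • f' (x - y) ∂ν) x := by
  set L := InnerProductSpace.toDual ℝ E
  have hF' : ∀ x, AEStronglyMeasurable (fun y => g y • f' (x - y)) ν := fun x =>
    hg.aestronglyMeasurable.smul
      (hf'_meas.comp (measurable_const.sub measurable_id)).aestronglyMeasurable
  rw [hasGradientAt_iff_hasFDerivAt]
  refine HasFDerivAt.congr_fderiv (hasFDerivAt_integral_of_dominated_of_fderiv_le
    (F' := fun x y => L (g y • f' (x - y))) (bound := fun y => ‖g y‖ * C) Filter.univ_mem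
    (.of_forall fun x => (hgf x).1) (hgf x) (L.continuous.comp_aestronglyMeasurable (hF' x))
    (.of_forall fun y x _ => ?_) (hg.norm.mul_const C) (.of_forall fun y x _ => ?_))
    (L.toContinuousLinearEquiv.integral_comp_comm _)
  · rw [L.norm_map, norm_smul]
    exact mul_le_mul_of_nonneg_left (hf'_le _) (norm_nonneg _)
  · rw [map_smul]
    exact ((hf (x - y)).hasFDerivAt.comp x ((hasFDerivAt_id x).sub_const y)).const_mul (g y)

end Translation

lemma integrable_exp_neg_mul_sq_norm {V : Type*} [NormedAddCommGroup V] [InnerProductSpace ℝ V]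
    [FiniteDimensional ℝ V] [MeasurableSpace V] [BorelSpace V] {b : ℝ} (hb : 0 < b) :
    Integrable (fun z : V => Real.exp (-b * ‖z‖ ^ 2)) := by
  refine (GaussianFourier.integrable_cexp_neg_mul_sq_norm_add (V := V) (b := (b : ℂ))
    (by simpa using hb) 0 0).re.congr (.of_forall fun z => ?_)
  simp [← Complex.ofReal_pow, ← Complex.ofReal_mul, ← Complex.ofReal_neg, Complex.exp_ofReal_re]

lemma sq_mul_exp_neg_mul_sq_le {b : ℝ} (hb : 0 < b) (t : ℝ) :
    t ^ 2 * Real.exp (-b * t ^ 2) ≤ b⁻¹ := by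
  rw [neg_mul, Real.exp_neg, ← div_eq_mul_inv, div_le_iff₀ (Real.exp_pos _), inv_mul_eq_div,
    le_div_iff₀ hb, mul_comm]
  linarith [Real.add_one_le_exp (b * t ^ 2)]

section Gaussian

variable {k : ℕ} {τ : ℝ}

lemma gaussDensity_pos (hτ : 0 < τ) (z : Euc k) : 0 < gaussDensity k τ z := by
  unfold gaussDensity
  positivity

lemma continuous_gaussDensity : Continuous (gaussDensity k τ) := by
  unfold gaussDensity
  fun_prop

lemma gaussDensity_le (hτ : 0 < τ) (z : Euc k) :
    gaussDensity k τ z ≤ (2 * π * τ) ^ (-(k : ℝ) / 2) := by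
  refine mul_le_of_le_one_right (by positivity) (Real.exp_le_one_iff.2 ?_)
  rw [neg_div, neg_nonpos]
  positivity

lemma norm_gaussDensity_le (hτ : 0 < τ) (z : Euc k) :
    ‖gaussDensity k τ z‖ ≤ (2 * π * τ) ^ (-(k : ℝ) / 2) :=
  (Real.norm_of_nonneg (gaussDensity_pos hτ z).le).trans_le (gaussDensity_le hτ z)

lemma gaussDensity_eq (z : Euc k) :
    gaussDensity k τ z = (2 * π * τ) ^ (-(k : ℝ) / 2) * Real.exp (-(2 * τ)⁻¹ * ‖z‖ ^ 2) := by
  simp only [gaussDensity, neg_mul, inv_mul_eq_div, neg_div]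

lemma integrable_gaussDensity (hτ : 0 < τ) : Integrable (gaussDensity k τ) :=
  ((integrable_exp_neg_mul_sq_norm (by positivity)).const_mul _).congr
    (.of_forall fun z => (gaussDensity_eq z).symm)

lemma integral_gaussDensity (hτ : 0 < τ) : ∫ z : Euc k, gaussDensity k τ z = 1 := by
  simp_rw [gaussDensity_eq]
  rw [integral_const_mul, GaussianFourier.integral_rexp_neg_mul_sq_norm (by positivity),
    finrank_euclideanSpace, Fintype.card_fin, div_inv_eq_mul, mul_comm π,
    mul_right_comm 2 τ π, ← Real.rpow_add (by positivity), neg_div, neg_add_cancel,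
    Real.rpow_zero]

-- Completing the square in `w`.
lemma gaussDensity_mul_gaussDensity_sub {s : ℝ} (hs : 0 < s) (hτ : 0 < τ) (z w : Euc k) :
    gaussDensity k s w * gaussDensity k τ (z - w) =
      gaussDensity k (s + τ) z * gaussDensity k (s * τ / (s + τ)) (w - (s / (s + τ)) • z) := by
  have hconst : (2 * π * s) ^ (-(k : ℝ) / 2) * (2 * π * τ) ^ (-(k : ℝ) / 2) =
      (2 * π * (s + τ)) ^ (-(k : ℝ) / 2) * (2 * π * (s * τ / (s + τ))) ^ (-(k : ℝ) / 2) := by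
    rw [← Real.mul_rpow (by positivity) (by positivity),
      ← Real.mul_rpow (by positivity) (by positivity)]
    congr 1
    field_simp
  have hexp : -‖w‖ ^ 2 / (2 * s) + -‖z - w‖ ^ 2 / (2 * τ) =
      -‖z‖ ^ 2 / (2 * (s + τ)) + -‖w - (s / (s + τ)) • z‖ ^ 2 / (2 * (s * τ / (s + τ))) := by
    rw [norm_sub_sq_real z w, norm_sub_sq_real w, inner_smul_right, norm_smul,
      Real.norm_of_nonneg (by positivity), real_inner_comm z w]
    field_simp
    ring
  simp only [gaussDensity]
  calc _ = (2 * π * s) ^ (-(k : ℝ) / 2) * (2 * π * τ) ^ (-(k : ℝ) / 2) *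
        Real.exp (-‖w‖ ^ 2 / (2 * s) + -‖z - w‖ ^ 2 / (2 * τ)) := by
        rw [Real.exp_add]; ring
    _ = _ := by rw [hconst, hexp, Real.exp_add]; ring

lemma integral_gaussDensity_mul_sub {s : ℝ} (hs : 0 < s) (hτ : 0 < τ) (z : Euc k) :
    ∫ w, gaussDensity k s w * gaussDensity k τ (z - w) = gaussDensity k (s + τ) z := by
  simp_rw [gaussDensity_mul_gaussDensity_sub hs hτ z]
  rw [integral_const_mul, integral_sub_right_eq_self (gaussDensity k (s * τ / (s + τ))),
    integral_gaussDensity (by positivity), mul_one]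

def gaussGrad (k : ℕ) (τ : ℝ) (z : Euc k) : Euc k :=
  -(τ⁻¹ * gaussDensity k τ z) • z

lemma hasGradientAt_gaussDensity (z : Euc k) :
    HasGradientAt (gaussDensity k τ) (gaussGrad k τ z) z := by
  have h := (((hasStrictFDerivAt_norm_sq z).hasFDerivAt.const_mul (-(2 * τ)⁻¹)).exp).const_mul
    ((2 * π * τ) ^ (-(k : ℝ) / 2))
  rw [hasGradientAt_iff_hasFDerivAt]
  refine (h.congr_of_eventuallyEq (.of_forall fun u => gaussDensity_eq u)).congr_fderiv ?_
  ext u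
  simp only [gaussGrad, gaussDensity_eq, FunLike.coe_smul, Pi.smul_apply, innerSL_apply_apply,
    smul_eq_mul, InnerProductSpace.toDual_apply_apply, inner_smul_left, conj_trivial]
  ring

lemma continuous_gaussGrad : Continuous (gaussGrad k τ) :=
  (continuous_const.mul continuous_gaussDensity).neg.smul continuous_id

lemma norm_gaussGrad (hτ : 0 < τ) (z : Euc k) :
    ‖gaussGrad k τ z‖ = τ⁻¹ * gaussDensity k τ z * ‖z‖ := by
  rw [gaussGrad, norm_smul, norm_neg,
    Real.norm_of_nonneg (mul_pos (inv_pos.2 hτ) (gaussDensity_pos hτ z)).le]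

lemma norm_gaussGrad_le (hτ : 0 < τ) (z : Euc k) :
    ‖gaussGrad k τ z‖ ≤ τ⁻¹ * (2 * π * τ) ^ (-(k : ℝ) / 2) * (1 + 2 * τ) := by
  set e := Real.exp (-(2 * τ)⁻¹ * ‖z‖ ^ 2)
  have hsq : ‖z‖ ^ 2 * e ≤ 2 * τ := by
    have h := sq_mul_exp_neg_mul_sq_le (inv_pos.2 (by positivity : (0 : ℝ) < 2 * τ)) ‖z‖
    rwa [inv_inv] at h
  have he : e ≤ 1 := by
    rw [Real.exp_le_one_iff, neg_mul, neg_nonpos]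
    positivity
  have hz : ‖z‖ * e ≤ 1 + 2 * τ := by
    nlinarith [sq_nonneg (‖z‖ - 1), Real.exp_pos (-(2 * τ)⁻¹ * ‖z‖ ^ 2)]
  calc ‖gaussGrad k τ z‖ = τ⁻¹ * (2 * π * τ) ^ (-(k : ℝ) / 2) * (‖z‖ * e) := by
        rw [norm_gaussGrad hτ, gaussDensity_eq]; ring
    _ ≤ _ := by gcongr

lemma integrable_sq_norm_mul_gaussDensity (hτ : 0 < τ) :
    Integrable (fun z : Euc k => ‖z‖ ^ 2 * gaussDensity k τ z) := by
  have h4τ : (0 : ℝ) < (4 * τ)⁻¹ := by positivity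
  refine ((integrable_exp_neg_mul_sq_norm h4τ).const_mul
    (4 * τ * (2 * π * τ) ^ (-(k : ℝ) / 2))).mono'
    ((continuous_norm.pow 2).mul continuous_gaussDensity).aestronglyMeasurable
    (.of_forall fun z => ?_)
  have hsq := sq_mul_exp_neg_mul_sq_le h4τ ‖z‖
  rw [inv_inv] at hsq
  have hsplit : Real.exp (-(2 * τ)⁻¹ * ‖z‖ ^ 2) =
      Real.exp (-(4 * τ)⁻¹ * ‖z‖ ^ 2) * Real.exp (-(4 * τ)⁻¹ * ‖z‖ ^ 2) := by
    rw [← Real.exp_add]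
    congr 1
    field_simp
    ring
  rw [Real.norm_of_nonneg (mul_nonneg (sq_nonneg _) (gaussDensity_pos hτ z).le), gaussDensity_eq,
    hsplit]
  calc _ = (2 * π * τ) ^ (-(k : ℝ) / 2) * Real.exp (-(4 * τ)⁻¹ * ‖z‖ ^ 2) *
        (‖z‖ ^ 2 * Real.exp (-(4 * τ)⁻¹ * ‖z‖ ^ 2)) := by ring
    _ ≤ (2 * π * τ) ^ (-(k : ℝ) / 2) * Real.exp (-(4 * τ)⁻¹ * ‖z‖ ^ 2) * (4 * τ) := by gcongr
    _ = _ := by ring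

end Gaussian

section Heat

variable {k : ℕ} {μ : Measure (Euc k)} [IsFiniteMeasure μ] {τ : ℝ}

def heatGrad {k : ℕ} (μ : Measure (Euc k)) (τ : ℝ) (x : Euc k) : Euc k :=
  ∫ y, gaussGrad k τ (x - y) ∂μ

lemma integrable_gaussDensity_sub (hτ : 0 < τ) (x : Euc k) :
    Integrable (fun y => gaussDensity k τ (x - y)) μ :=
  integrable_comp_sub continuous_gaussDensity (norm_gaussDensity_le hτ) x

lemma hasGradientAt_heatDensity (hτ : 0 < τ) (x : Euc k) :
    HasGradientAt (heatDensity μ τ) (heatGrad μ τ x) x := by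
  have h := hasGradientAt_integral_mul_sub (ν := μ) (g := fun _ => 1)
    hasGradientAt_gaussDensity continuous_gaussGrad.measurable (norm_gaussGrad_le hτ)
    (integrable_const 1) (fun x => by simpa using integrable_gaussDensity_sub hτ x) x
  simp only [one_mul, one_smul] at h
  exact h

lemma continuous_heatDensity (hτ : 0 < τ) : Continuous (heatDensity μ τ) :=
  continuous_integral_comp_sub continuous_gaussDensity (norm_gaussDensity_le hτ)

lemma continuous_heatGrad (hτ : 0 < τ) : Continuous (heatGrad μ τ) :=
  continuous_integral_comp_sub continuous_gaussGrad (norm_gaussGrad_le hτ)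

lemma heatDensity_le (hτ : 0 < τ) (x : Euc k) :
    heatDensity μ τ x ≤ (2 * π * τ) ^ (-(k : ℝ) / 2) * μ.real Set.univ :=
  (le_abs_self _).trans <| norm_integral_le_of_norm_le_const <| .of_forall fun _ =>
    norm_gaussDensity_le hτ _

lemma norm_heatGrad_le (hτ : 0 < τ) (x : Euc k) :
    ‖heatGrad μ τ x‖ ≤ τ⁻¹ * (2 * π * τ) ^ (-(k : ℝ) / 2) * (1 + 2 * τ) * μ.real Set.univ :=
  norm_integral_le_of_norm_le_const (.of_forall fun _ => norm_gaussGrad_le hτ _)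

def fisherDensity {k : ℕ} (μ : Measure (Euc k)) (τ : ℝ) (x : Euc k) : ℝ :=
  ‖heatGrad μ τ x‖ ^ 2 / heatDensity μ τ x

lemma measurable_fisherDensity (hτ : 0 < τ) : Measurable (fisherDensity μ τ) :=
  ((continuous_heatGrad hτ).norm.pow 2).measurable.div (continuous_heatDensity hτ).measurable

lemma ofReal_fisherDensity_le (hτ : 0 < τ) (x : Euc k) :
    ENNReal.ofReal (fisherDensity μ τ x) ≤
      ∫⁻ y, ENNReal.ofReal (τ⁻¹ ^ 2 * (‖x - y‖ ^ 2 * gaussDensity k τ (x - y))) ∂μ := by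
  refine (ofReal_sq_norm_integral_div_integral_le (fun y => gaussDensity_pos hτ (x - y))
    (integrable_gaussDensity_sub hτ x)
    (integrable_comp_sub continuous_gaussGrad (norm_gaussGrad_le hτ) x)).trans_eq
    (lintegral_congr fun y => ?_)
  rw [norm_gaussGrad hτ]
  congr 1
  field_simp [(gaussDensity_pos hτ (x - y)).ne']

lemma lintegral_ofReal_fisherDensity_lt_top (hτ : 0 < τ) :
    ∫⁻ x, ENNReal.ofReal (fisherDensity μ τ x) < ⊤ := by
  set F : Euc k → ℝ≥0∞ := fun z => ENNReal.ofReal (τ⁻¹ ^ 2 * (‖z‖ ^ 2 * gaussDensity k τ z))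
  have hF : Measurable F := (measurable_const.mul
    ((continuous_norm.pow 2).mul continuous_gaussDensity).measurable).ennreal_ofReal
  calc ∫⁻ x, ENNReal.ofReal (fisherDensity μ τ x)
      ≤ ∫⁻ x, ∫⁻ y, 1 * F (x - y) ∂μ := lintegral_mono fun x => by
        simpa only [one_mul] using ofReal_fisherDensity_le hτ x
    _ = μ Set.univ * ∫⁻ z, F z := by
        rw [lintegral_lintegral_mul_sub volume μ measurable_const hF, lintegral_const, one_mul]
    _ < ⊤ := ENNReal.mul_lt_top (measure_lt_top _ _)
        ((integrable_sq_norm_mul_gaussDensity hτ).const_mul _).lintegral_lt_top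

variable [NeZero μ]

lemma heatDensity_pos (hτ : 0 < τ) (x : Euc k) : 0 < heatDensity μ τ x := by
  rw [heatDensity, integral_pos_iff_support_of_nonneg (fun _ => (gaussDensity_pos hτ _).le)
    (integrable_gaussDensity_sub hτ x),
    Function.support_eq_univ fun _ => (gaussDensity_pos hτ _).ne']
  exact Measure.measure_univ_pos.2 (NeZero.ne μ)

lemma gradient_logHeat (hτ : 0 < τ) (x : Euc k) :
    gradient (logHeat μ τ) x = (heatDensity μ τ x)⁻¹ • heatGrad μ τ x := by
  refine HasGradientAt.gradient ?_
  rw [hasGradientAt_iff_hasFDerivAt, map_smul]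
  exact (Real.hasDerivAt_log (heatDensity_pos hτ x).ne').comp_hasFDerivAt x
    (hasGradientAt_heatDensity hτ x).hasFDerivAt

lemma fisherInfo_eq_toReal_lintegral (hτ : 0 < τ) :
    FisherInfo μ τ = (∫⁻ x, ENNReal.ofReal (fisherDensity μ τ x)).toReal := by
  have hJ : ∀ x, heatDensity μ τ x * ‖gradient (logHeat μ τ) x‖ ^ 2 = fisherDensity μ τ x := by
    intro x
    have hp := heatDensity_pos (μ := μ) hτ x
    rw [gradient_logHeat hτ, norm_smul, Real.norm_of_nonneg (inv_nonneg.2 hp.le), fisherDensity]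
    field_simp
  simp_rw [FisherInfo, hJ]
  exact integral_eq_lintegral_of_nonneg_ae
    (.of_forall fun x => div_nonneg (sq_nonneg _) (heatDensity_pos hτ x).le)
    (measurable_fisherDensity hτ).aestronglyMeasurable

end Heat

section Semigroup

variable {k : ℕ} {μ : Measure (Euc k)} [IsFiniteMeasure μ] {s τ : ℝ}

lemma integrable_gaussDensity_mul_heatDensity_sub (hs : 0 < s) (hτ : 0 < τ) (x : Euc k) :
    Integrable (fun w => gaussDensity k s w * heatDensity μ τ (x - w)) :=
  (integrable_gaussDensity hs).mul_bdd
    ((continuous_heatDensity hτ).comp (continuous_const.sub continuous_id)).aestronglyMeasurable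
    (.of_forall fun _ => (Real.norm_of_nonneg (integral_nonneg fun _ =>
      (gaussDensity_pos hτ _).le)).trans_le (heatDensity_le hτ _))

lemma heatDensity_add (hs : 0 < s) (hτ : 0 < τ) (x : Euc k) :
    heatDensity μ (s + τ) x = ∫ w, gaussDensity k s w * heatDensity μ τ (x - w) := by
  have hint : Integrable (Function.uncurry fun y w =>
      gaussDensity k s w * gaussDensity k τ (x - y - w)) (μ.prod volume) := by
    refine ((integrable_const (1 : ℝ)).mul_prod
      ((integrable_gaussDensity hs).mul_const ((2 * π * τ) ^ (-(k : ℝ) / 2)))).mono'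
      ((continuous_gaussDensity.comp continuous_snd).mul (continuous_gaussDensity.comp
        ((continuous_const.sub continuous_fst).sub continuous_snd))).aestronglyMeasurable
      (.of_forall fun z => ?_)
    rw [Function.uncurry_apply_pair, one_mul, Real.norm_of_nonneg
      (mul_nonneg (gaussDensity_pos hs _).le (gaussDensity_pos hτ _).le)]
    exact mul_le_mul_of_nonneg_left (gaussDensity_le hτ _) (gaussDensity_pos hs _).le
  simp_rw [heatDensity, ← integral_gaussDensity_mul_sub hs hτ, ← integral_const_mul]
  rw [integral_integral_swap hint]
  simp_rw [sub_right_comm x]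

lemma heatGrad_add (hs : 0 < s) (hτ : 0 < τ) (x : Euc k) :
    heatGrad μ (s + τ) x = ∫ w, gaussDensity k s w • heatGrad μ τ (x - w) := by
  have h := hasGradientAt_integral_mul_sub (ν := volume) (hasGradientAt_heatDensity (μ := μ) hτ)
    (continuous_heatGrad hτ).measurable (norm_heatGrad_le hτ) (integrable_gaussDensity hs)
    (integrable_gaussDensity_mul_heatDensity_sub hs hτ) x
  simp_rw [← heatDensity_add hs hτ] at h
  exact (hasGradientAt_heatDensity (μ := μ) (by positivity) x).unique h

variable [NeZero μ]

lemma ofReal_fisherDensity_add_le (hs : 0 < s) (hτ : 0 < τ) (x : Euc k) :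
    ENNReal.ofReal (fisherDensity μ (s + τ) x) ≤
      ∫⁻ w, ENNReal.ofReal (gaussDensity k s w) * ENNReal.ofReal (fisherDensity μ τ (x - w)) := by
  have hv : Integrable (fun w => gaussDensity k s w • heatGrad μ τ (x - w)) :=
    (integrable_gaussDensity hs).smul_bdd _
      ((continuous_heatGrad hτ).comp (continuous_const.sub continuous_id)).aestronglyMeasurable
      (.of_forall fun _ => norm_heatGrad_le hτ _)
  calc ENNReal.ofReal (fisherDensity μ (s + τ) x)
      = ENNReal.ofReal (‖∫ w, gaussDensity k s w • heatGrad μ τ (x - w)‖ ^ 2 /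
          ∫ w, gaussDensity k s w * heatDensity μ τ (x - w)) := by
        rw [fisherDensity, heatDensity_add hs hτ, heatGrad_add hs hτ]
    _ ≤ ∫⁻ w, ENNReal.ofReal (‖gaussDensity k s w • heatGrad μ τ (x - w)‖ ^ 2 /
          (gaussDensity k s w * heatDensity μ τ (x - w))) :=
        ofReal_sq_norm_integral_div_integral_le
          (fun w => mul_pos (gaussDensity_pos hs w) (heatDensity_pos (μ := μ) hτ (x - w)))
          (integrable_gaussDensity_mul_heatDensity_sub hs hτ x) hv
    _ = _ := lintegral_congr fun w => by
        rw [← ENNReal.ofReal_mul (gaussDensity_pos hs w).le, fisherDensity, norm_smul,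
          Real.norm_of_nonneg (gaussDensity_pos hs w).le]
        congr 1
        field_simp [(gaussDensity_pos hs w).ne']

lemma lintegral_ofReal_fisherDensity_add_le (hs : 0 < s) (hτ : 0 < τ) :
    ∫⁻ x, ENNReal.ofReal (fisherDensity μ (s + τ) x) ≤
      ∫⁻ x, ENNReal.ofReal (fisherDensity μ τ x) := by
  calc _ ≤ ∫⁻ x, ∫⁻ w, ENNReal.ofReal (gaussDensity k s w) *
          ENNReal.ofReal (fisherDensity μ τ (x - w)) :=
        lintegral_mono fun x => ofReal_fisherDensity_add_le hs hτ x
    _ = (∫⁻ w, ENNReal.ofReal (gaussDensity k s w)) *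
          ∫⁻ x, ENNReal.ofReal (fisherDensity μ τ x) :=
        lintegral_lintegral_mul_sub volume volume continuous_gaussDensity.measurable.ennreal_ofReal
          (measurable_fisherDensity hτ).ennreal_ofReal
    _ = _ := by
        rw [← ofReal_integral_eq_lintegral_ofReal (integrable_gaussDensity hs)
          (.of_forall fun w => (gaussDensity_pos hs w).le), integral_gaussDensity hs,
          ENNReal.ofReal_one, one_mul]

lemma fisherInfo_add_le (hs : 0 < s) (hτ : 0 < τ) : FisherInfo μ (s + τ) ≤ FisherInfo μ τ := by
  rw [fisherInfo_eq_toReal_lintegral (by positivity), fisherInfo_eq_toReal_lintegral hτ]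
  exact ENNReal.toReal_mono (lintegral_ofReal_fisherDensity_lt_top hτ).ne
    (lintegral_ofReal_fisherDensity_add_le hs hτ)

end Semigroup

theorem fisher_info_antitoneOn_general
    (k : ℕ) (μ : Measure (Euc k)) [IsProbabilityMeasure μ] :
    AntitoneOn (fun τ => FisherInfo μ τ) (Set.Ioi (0 : ℝ)) := by
  intro τ hτ τ' _ hle
  rcases hle.eq_or_lt with rfl | hlt
  · exact le_rfl
  · simpa using fisherInfo_add_le (μ := μ) (sub_pos.2 hlt) hτ

/-- the Fisher Information `τ ↦ I^{(k)}(μ_τ)` is nonincreasing on `(0, ∞)`. -/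
theorem fisher_info_antitoneOn
    (k : ℕ) (hk : 1 ≤ k) (μ : Measure (Euc k)) [IsProbabilityMeasure μ]
    (hcomp : ∃ R : ℝ, μ (Metric.closedBall (0 : Euc k) R)ᶜ = 0) :
    AntitoneOn (fun τ => FisherInfo μ τ) (Set.Ioi (0 : ℝ)) :=
  fisher_info_antitoneOn_general k μ
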